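/- Let Ω ⊆ ℝⁿ be open, let ζ : Ω → ℂ² be differentiable with ζ(x) a nonzero Majorana spinor for every x ∈ Ω, and suppose there are real-valued functions f_μ, c_μ : Ω → ℝ (μ = 1,…,n) such that ∂_μζ = f_μ·ζ + c_μ·(i·σ₃)·ζ on Ω. Then for every μ and every x ∈ Ω: (i) ∂_μ[N∘ζ](x) = 2·f_μ(x)·N(ζ(x)); (ii) ∂_μ[X_a∘ζ](x) = 2·c_μ(x)·Y_a(ζ(x)) for a = 1,2; and consequently (iii) c_μ(x) = ½·(Y₁(ζ(x))·∂_μ[X₁∘ζ](x) + Y₂(ζ(x))·∂_μ[X₂∘ζ](x)). -/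

import Mathlib

/-! The Killing-type equation says that `ζ` moves by a real rescaling `f_μ` and a rotation
generated by the anti-Hermitian matrix `K = iσ₃`. Differentiating any bilinear `ζ†Mζ` along it
gives `2 f_μ ζ†Mζ + c_μ ζ†[M, K]ζ`: for `M = 1` this is (i), and in the normalised bilinears
`X_a = ζ†σ_aζ / N` the rescaling cancels, so that `[σ₁, K] = 2σ₂` and `[σ₂, K] = -2σ₁` give (ii).
For a Majorana spinor `(a, b)`, i.e. `conj a = i b` and `conj b = i a`, one finds `N = 2iab`
and `X₁² + X₂² = 1`, which turns (ii) into (iii). -/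

open Matrix Complex

noncomputable section

/-- Pauli matrix σ₁. -/
def σ1 : Matrix (Fin 2) (Fin 2) ℂ := !![0, 1; 1, 0]
/-- Pauli matrix σ₂. -/
def σ2 : Matrix (Fin 2) (Fin 2) ℂ := !![0, -I; I, 0]
/-- Pauli matrix σ₃. -/
def σ3 : Matrix (Fin 2) (Fin 2) ℂ := !![1, 0; 0, -1]

/-- A spinor ζ ∈ ℂ² is Majorana if conj(ζ) = i σ₁ ζ componentwise. -/
def IsMajorana (ζ : Fin 2 → ℂ) : Prop := star ζ = (I • σ1).mulVec ζ

/-- The bilinear N(ζ) = ζ†ζ. -/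
def Nbil (ζ : Fin 2 → ℂ) : ℂ := star ζ ⬝ᵥ ζ

/-- The bilinear X₁(ζ) = (ζ†σ₁ζ)/N(ζ). -/
def X1 (ζ : Fin 2 → ℂ) : ℂ := (star ζ ⬝ᵥ σ1.mulVec ζ) / Nbil ζ

/-- The bilinear X₂(ζ) = (ζ†σ₂ζ)/N(ζ). -/
def X2 (ζ : Fin 2 → ℂ) : ℂ := (star ζ ⬝ᵥ σ2.mulVec ζ) / Nbil ζ

/-- Y₁(ζ) = X₂(ζ). -/
def Y1 (ζ : Fin 2 → ℂ) : ℂ := X2 ζ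

/-- Y₂(ζ) = −X₁(ζ). -/
def Y2 (ζ : Fin 2 → ℂ) : ℂ := -X1 ζ

/-- The partial derivative in the μ-th coordinate direction of ℝⁿ. -/
def pderiv {n : ℕ} {E : Type*} [NormedAddCommGroup E] [NormedSpace ℝ E]
    (μ : Fin n) (f : (Fin n → ℝ) → E) (x : Fin n → ℝ) : E :=
  fderiv ℝ f x (Pi.single μ 1)

section QuadraticForm

variable {ι : Type*} [Fintype ι]

theorem star_dotProduct_mulVec_eq_sum (M : Matrix ι ι ℂ) (u w : ι → ℂ) :
    star u ⬝ᵥ M *ᵥ w = ∑ i, ∑ j, star (u i) * (M i j * w j) := by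
  simp [dotProduct, mulVec, Finset.mul_sum]

open scoped ComplexOrder in
theorem star_dotProduct_self_ne_zero {u : ι → ℂ} (hu : u ≠ 0) : star u ⬝ᵥ u ≠ 0 :=
  dotProduct_star_self_eq_zero.not.2 hu

theorem star_dotProduct_mulVec_variation_of_conjTranspose_eq_neg (M : Matrix ι ι ℂ)
    {K : Matrix ι ι ℂ} (hK : Kᴴ = -K) (a b : ℝ) (u : ι → ℂ) :
    star ((a : ℂ) • u + (b : ℂ) • K *ᵥ u) ⬝ᵥ M *ᵥ u
        + star u ⬝ᵥ M *ᵥ ((a : ℂ) • u + (b : ℂ) • K *ᵥ u)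
      = 2 * a * (star u ⬝ᵥ M *ᵥ u) + b * (star u ⬝ᵥ (M * K - K * M) *ᵥ u) := by
  have hstar : star ((a : ℂ) • u + (b : ℂ) • K *ᵥ u)
      = (a : ℂ) • star u - (b : ℂ) • star u ᵥ* K := by
    rw [star_add, star_smul, star_smul, star_mulVec, hK, vecMul_neg, smul_neg, ← sub_eq_add_neg]
    simp only [RCLike.star_def, conj_ofReal, coe_smul]
  rw [hstar, sub_dotProduct, smul_dotProduct, smul_dotProduct, ← dotProduct_mulVec, mulVec_mulVec,
    mulVec_add, mulVec_smul, mulVec_smul, mulVec_mulVec, dotProduct_add, dotProduct_smul,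
    dotProduct_smul, sub_mulVec, dotProduct_sub]
  simp only [smul_eq_mul]
  ring

end QuadraticForm

section Quotient

variable {𝕜 : Type*} [NontriviallyNormedField 𝕜] {𝕜' : Type*} [NontriviallyNormedField 𝕜']
  [NormedAlgebra 𝕜 𝕜'] {E : Type*} [NormedAddCommGroup E] [NormedSpace 𝕜 E]
  {F N : E → 𝕜'} {x : E}

theorem fderiv_div_apply (hF : DifferentiableAt 𝕜 F x) (hN : DifferentiableAt 𝕜 N x)
    (hN0 : N x ≠ 0) (v : E) :
    fderiv 𝕜 (fun y => F y / N y) x v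
      = (fderiv 𝕜 F x v * N x - F x * fderiv 𝕜 N x v) / N x ^ 2 := by
  have hinv : HasFDerivAt (fun y => (N y)⁻¹)
      ((-ContinuousLinearMap.mulLeftRight 𝕜 𝕜' (N x)⁻¹ (N x)⁻¹).comp (fderiv 𝕜 N x)) x :=
    (hasFDerivAt_inv' hN0).comp x hN.hasFDerivAt
  simp_rw [div_eq_mul_inv]
  rw [(hF.hasFDerivAt.fun_mul hinv).fderiv]
  simp only [ContinuousLinearMap.neg_comp, smul_neg, _root_.add_apply,
    _root_.neg_apply, _root_.smul_apply, ContinuousLinearMap.comp_apply,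
    ContinuousLinearMap.mulLeftRight_apply, smul_eq_mul]
  field_simp
  ring

theorem fderiv_div_apply_of_common_rate {v : E} {s g : 𝕜'} (hF : DifferentiableAt 𝕜 F x)
    (hN : DifferentiableAt 𝕜 N x) (hN0 : N x ≠ 0) (hF' : fderiv 𝕜 F x v = s * F x + g)
    (hN' : fderiv 𝕜 N x v = s * N x) :
    fderiv 𝕜 (fun y => F y / N y) x v = g / N x := by
  rw [fderiv_div_apply hF hN hN0, hF', hN']
  field_simp
  ring

end Quotient

section SpinorFlow

variable {E : Type*} [NormedAddCommGroup E] [NormedSpace ℝ E] {ι : Type*} [Fintype ι]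
  {ζ : E → ι → ℂ} {x : E}

theorem DifferentiableAt.star_dotProduct_mulVec (M : Matrix ι ι ℂ)
    (h : DifferentiableAt ℝ ζ x) :
    DifferentiableAt ℝ (fun y => star (ζ y) ⬝ᵥ M *ᵥ ζ y) x := by
  have := differentiableAt_pi.1 h
  simp_rw [star_dotProduct_mulVec_eq_sum]
  fun_prop

theorem fderiv_star_dotProduct_mulVec_apply (M : Matrix ι ι ℂ) (h : DifferentiableAt ℝ ζ x)
    (v : E) :
    fderiv ℝ (fun y => star (ζ y) ⬝ᵥ M *ᵥ ζ y) x v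
      = star (fderiv ℝ ζ x v) ⬝ᵥ M *ᵥ ζ x + star (ζ x) ⬝ᵥ M *ᵥ fderiv ℝ ζ x v := by
  have hcomp : ∀ i, HasFDerivAt (fun y => ζ y i)
      ((ContinuousLinearMap.proj i).comp (fderiv ℝ ζ x)) x :=
    hasFDerivAt_pi'.1 h.hasFDerivAt
  simp_rw [star_dotProduct_mulVec_eq_sum]
  rw [(HasFDerivAt.fun_sum fun i _ => HasFDerivAt.fun_sum fun j _ =>
    (hcomp i).star.fun_mul ((hcomp j).const_mul (M i j))).fderiv]
  simp [Finset.sum_add_distrib, add_comm, mul_comm, mul_left_comm]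

variable {K : Matrix ι ι ℂ} {v : E} {a b : ℝ}

theorem fderiv_star_dotProduct_mulVec_apply_of_fderiv_eq (M : Matrix ι ι ℂ) (hK : Kᴴ = -K)
    (h : DifferentiableAt ℝ ζ x) (hζ' : fderiv ℝ ζ x v = (a : ℂ) • ζ x + (b : ℂ) • K *ᵥ ζ x) :
    fderiv ℝ (fun y => star (ζ y) ⬝ᵥ M *ᵥ ζ y) x v
      = 2 * a * (star (ζ x) ⬝ᵥ M *ᵥ ζ x) + b * (star (ζ x) ⬝ᵥ (M * K - K * M) *ᵥ ζ x) := by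
  rw [fderiv_star_dotProduct_mulVec_apply M h, hζ',
    star_dotProduct_mulVec_variation_of_conjTranspose_eq_neg M hK]

theorem fderiv_star_dotProduct_self_apply_of_fderiv_eq [DecidableEq ι] (hK : Kᴴ = -K)
    (h : DifferentiableAt ℝ ζ x) (hζ' : fderiv ℝ ζ x v = (a : ℂ) • ζ x + (b : ℂ) • K *ᵥ ζ x) :
    fderiv ℝ (fun y => star (ζ y) ⬝ᵥ ζ y) x v = 2 * a * (star (ζ x) ⬝ᵥ ζ x) := by
  simpa using fderiv_star_dotProduct_mulVec_apply_of_fderiv_eq 1 hK h hζ'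

theorem fderiv_star_dotProduct_mulVec_div_apply_of_fderiv_eq [DecidableEq ι] (M : Matrix ι ι ℂ)
    (hK : Kᴴ = -K) (h : DifferentiableAt ℝ ζ x)
    (hζ' : fderiv ℝ ζ x v = (a : ℂ) • ζ x + (b : ℂ) • K *ᵥ ζ x) (hζ0 : ζ x ≠ 0) :
    fderiv ℝ (fun y => star (ζ y) ⬝ᵥ M *ᵥ ζ y / star (ζ y) ⬝ᵥ ζ y) x v
      = b * (star (ζ x) ⬝ᵥ (M * K - K * M) *ᵥ ζ x) / star (ζ x) ⬝ᵥ ζ x := by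
  have hN : DifferentiableAt ℝ (fun y => star (ζ y) ⬝ᵥ ζ y) x := by
    simpa using h.star_dotProduct_mulVec 1
  exact fderiv_div_apply_of_common_rate (h.star_dotProduct_mulVec M) hN
    (star_dotProduct_self_ne_zero hζ0)
    (fderiv_star_dotProduct_mulVec_apply_of_fderiv_eq M hK h hζ')
    (fderiv_star_dotProduct_self_apply_of_fderiv_eq hK h hζ')

end SpinorFlow

theorem conjTranspose_I_smul_σ3 : (I • σ3)ᴴ = -(I • σ3) := by
  ext i j; fin_cases i <;> fin_cases j <;> simp [σ3]

theorem σ1_mul_sub_mul_σ1 : σ1 * (I • σ3) - (I • σ3) * σ1 = (2 : ℂ) • σ2 := by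
  ext i j; fin_cases i <;> fin_cases j <;> simp [σ1, σ2, σ3] <;> ring

theorem σ2_mul_sub_mul_σ2 : σ2 * (I • σ3) - (I • σ3) * σ2 = (-2 : ℂ) • σ1 := by
  ext i j; fin_cases i <;> fin_cases j <;> simp [σ1, σ2, σ3] <;> ring

theorem isMajorana_iff {ζ : Fin 2 → ℂ} :
    IsMajorana ζ ↔ starRingEnd ℂ (ζ 0) = I * ζ 1 ∧ starRingEnd ℂ (ζ 1) = I * ζ 0 := by
  simp [IsMajorana, σ1, funext_iff, Fin.forall_fin_two, dotProduct, Fin.sum_univ_two]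

theorem IsMajorana.X1_sq_add_X2_sq {ζ : Fin 2 → ℂ} (hM : IsMajorana ζ) (hζ : ζ ≠ 0) :
    X1 ζ ^ 2 + X2 ζ ^ 2 = 1 := by
  obtain ⟨h0, h1⟩ := isMajorana_iff.1 hM
  have hN0 : Nbil ζ ≠ 0 := star_dotProduct_self_ne_zero hζ
  have hN : Nbil ζ = 2 * I * (ζ 0 * ζ 1) := by
    simp [Nbil, dotProduct, Fin.sum_univ_two, h0, h1]; ring
  have hS1 : star ζ ⬝ᵥ σ1 *ᵥ ζ = I * (ζ 0 ^ 2 + ζ 1 ^ 2) := by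
    simp [σ1, mulVec, dotProduct, Fin.sum_univ_two, h0, h1]; ring
  have hS2 : star ζ ⬝ᵥ σ2 *ᵥ ζ = ζ 1 ^ 2 - ζ 0 ^ 2 := by
    simp [σ2, mulVec, dotProduct, Fin.sum_univ_two, h0, h1]
    linear_combination (ζ 0 ^ 2 - ζ 1 ^ 2) * I_sq
  rw [X1, X2, div_pow, div_pow, ← add_div, div_eq_one_iff_eq (pow_ne_zero 2 hN0), hS1, hS2, hN]
  linear_combination (ζ 0 ^ 2 - ζ 1 ^ 2) ^ 2 * I_sq

/-- Let ζ : Ω → ℂ² be a differentiable family of nonzero Majorana spinors on the open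
set Ω, satisfying ∂_μζ = f_μ·ζ + c_μ·(iσ₃)·ζ with real-valued f_μ, c_μ. Then
(i) ∂_μ(N∘ζ) = 2 f_μ N(ζ); (ii) ∂_μ(X_a∘ζ) = 2 c_μ Y_a(ζ) for a = 1,2; and consequently
(iii) c_μ = ½ (Y₁(ζ)·∂_μ(X₁∘ζ) + Y₂(ζ)·∂_μ(X₂∘ζ)). -/
theorem killing_spinor_bilinear_derivatives {n : ℕ} (Ω : Set (Fin n → ℝ))
    (hΩ : IsOpen Ω) (ζ : (Fin n → ℝ) → (Fin 2 → ℂ)) (hdiff : DifferentiableOn ℝ ζ Ω)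
    (hζ : ∀ x ∈ Ω, ζ x ≠ 0 ∧ IsMajorana (ζ x))
    (f c : Fin n → (Fin n → ℝ) → ℝ)
    (hode : ∀ μ : Fin n, ∀ x ∈ Ω,
      pderiv μ ζ x = (f μ x : ℂ) • ζ x + (c μ x : ℂ) • (I • σ3).mulVec (ζ x)) :
    ∀ μ : Fin n, ∀ x ∈ Ω,
      pderiv μ (fun y => Nbil (ζ y)) x = 2 * (f μ x : ℂ) * Nbil (ζ x) ∧
      pderiv μ (fun y => X1 (ζ y)) x = 2 * (c μ x : ℂ) * Y1 (ζ x) ∧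
      pderiv μ (fun y => X2 (ζ y)) x = 2 * (c μ x : ℂ) * Y2 (ζ x) ∧
      (c μ x : ℂ) = (1 / 2) * (Y1 (ζ x) * pderiv μ (fun y => X1 (ζ y)) x
        + Y2 (ζ x) * pderiv μ (fun y => X2 (ζ y)) x) := by
  intro μ x hx
  obtain ⟨hne, hmaj⟩ := hζ x hx
  have hζx : DifferentiableAt ℝ ζ x := hdiff.differentiableAt (hΩ.mem_nhds hx)
  have hN : pderiv μ (fun y => Nbil (ζ y)) x = 2 * (f μ x : ℂ) * Nbil (ζ x) :=
    fderiv_star_dotProduct_self_apply_of_fderiv_eq conjTranspose_I_smul_σ3 hζx (hode μ x hx)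
  have hX1 : pderiv μ (fun y => X1 (ζ y)) x = 2 * (c μ x : ℂ) * Y1 (ζ x) := by
    have h := fderiv_star_dotProduct_mulVec_div_apply_of_fderiv_eq σ1 conjTranspose_I_smul_σ3
      hζx (hode μ x hx) hne
    rw [σ1_mul_sub_mul_σ1, smul_mulVec, dotProduct_smul, smul_eq_mul] at h
    exact h.trans (by rw [Y1, X2, Nbil]; ring)
  have hX2 : pderiv μ (fun y => X2 (ζ y)) x = 2 * (c μ x : ℂ) * Y2 (ζ x) := by
    have h := fderiv_star_dotProduct_mulVec_div_apply_of_fderiv_eq σ2 conjTranspose_I_smul_σ3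
      hζx (hode μ x hx) hne
    rw [σ2_mul_sub_mul_σ2, smul_mulVec, dotProduct_smul, smul_eq_mul] at h
    exact h.trans (by rw [Y2, X1, Nbil]; ring)
  refine ⟨hN, hX1, hX2, ?_⟩
  rw [hX1, hX2, Y1, Y2]
  linear_combination (-(c μ x : ℂ)) * hmaj.X1_sq_add_X2_sq hne

end
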